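/- Let G be a graph with vertices a ≠ b, and let A ⊆ V(G)−{a}, B ⊆ V(G)−{b}. If b ∈ A and a ∈ B, then ρ_{G∖a∖b}(A∩B) + ρ_G(A∪B) ≤ ρ_{G∖a}(A) + ρ_{G∖b}(B). -/

import Mathlib

open Finset

variable {V : Type} [Fintype V] [DecidableEq V]

open scoped Classical

/-- The rank over GF(2) of the `X × Y` submatrix of the adjacency matrix of `G`. -/
noncomputable def cutRankOn (G : SimpleGraph V) (X Y : Finset V) : ℕ :=
  (Matrix.of (fun (i : ↥X) (j : ↥Y) => if G.Adj i.1 j.1 then (1 : ZMod 2) else 0)).rank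

/-- The cut-rank of `X` in the graph `G` restricted to the vertex set `S`:
the rank over GF(2) of the `X × (S \ X)` submatrix of the adjacency matrix. -/
noncomputable def cutRank (G : SimpleGraph V) (S X : Finset V) : ℕ :=
  cutRankOn G X (S \ X)

/-- `A` gives a split of the graph `G` restricted to the vertex set `S`. -/
def IsSplit (G : SimpleGraph V) (S A : Finset V) : Prop :=
  A ⊆ S ∧ cutRank G S A ≤ 1 ∧ 2 ≤ A.card ∧ 2 ≤ (S \ A).card

/-- The graph `G` restricted to the vertex set `S` is prime: connected and with no split. -/
def IsPrime (G : SimpleGraph V) (S : Finset V) : Prop :=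
  (G.induce (↑S : Set V)).Connected ∧ ∀ A, ¬ IsSplit G S A

/-- `G` restricted to `S` is `k⁺ˡ`-rank-connected. -/
def RankConn (G : SimpleGraph V) (S : Finset V) (k l : ℤ) : Prop :=
  ∀ X ⊆ S, (cutRank G S X : ℤ) < k →
    min (X.card : ℤ) (((S \ X).card : ℤ)) < k + l

/-- `G` restricted to `S` is `k`-rank-connected. -/
def RankConnAll (G : SimpleGraph V) (S : Finset V) (k : ℤ) : Prop :=
  ∀ m : ℤ, m ≤ k → RankConn G S m 0

def SideA (G : SimpleGraph V) (v w x : V) : Prop := G.Adj v x ∧ ¬ G.Adj w x ∧ x ≠ w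
def SideB (G : SimpleGraph V) (v w x : V) : Prop := G.Adj w x ∧ ¬ G.Adj v x ∧ x ≠ v
def SideC (G : SimpleGraph V) (v w x : V) : Prop := G.Adj v x ∧ G.Adj w x

/-- `x` and `y` lie in different ones among the three sets
`N(v)−N(w)−{w}`, `N(w)−N(v)−{v}`, `N(v)∩N(w)`. -/
def PivotToggle (G : SimpleGraph V) (v w x y : V) : Prop :=
  (SideA G v w x ∧ SideB G v w y) ∨ (SideB G v w x ∧ SideA G v w y) ∨
  (SideA G v w x ∧ SideC G v w y) ∨ (SideC G v w x ∧ SideA G v w y) ∨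
  (SideB G v w x ∧ SideC G v w y) ∨ (SideC G v w x ∧ SideB G v w y)

set_option linter.unusedSectionVars false in
lemma pivotToggle_symm {G : SimpleGraph V} {v w x y : V}
    (h : PivotToggle G v w x y) : PivotToggle G v w y x := by
  unfold PivotToggle at h ⊢; tauto

/-- The graph `G ∧ vw` obtained by pivoting the edge `vw`: toggle adjacency across the
three sets and swap the labels of `v` and `w`. -/
def pivot (G : SimpleGraph V) (v w : V) : SimpleGraph V where
  Adj a b := a ≠ b ∧
    Xor' (G.Adj (Equiv.swap v w a) (Equiv.swap v w b))
         (PivotToggle G v w (Equiv.swap v w a) (Equiv.swap v w b))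
  symm := by
    constructor
    intro a b h
    obtain ⟨hne, hx⟩ := h
    refine ⟨hne.symm, ?_⟩
    have hA : G.Adj (Equiv.swap v w b) (Equiv.swap v w a) ↔
        G.Adj (Equiv.swap v w a) (Equiv.swap v w b) := SimpleGraph.adj_comm _ _ _
    have hT : PivotToggle G v w (Equiv.swap v w b) (Equiv.swap v w a) ↔
        PivotToggle G v w (Equiv.swap v w a) (Equiv.swap v w b) :=
      ⟨pivotToggle_symm, pivotToggle_symm⟩
    rw [hA, hT]
    exact hx
  loopless := by constructor; intro a h; exact h.1 rfl

/-- One pivot step along an edge. -/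
def PivotStep (G H : SimpleGraph V) : Prop := ∃ v w, G.Adj v w ∧ H = pivot G v w

/-- Pivot-equivalence: a sequence of pivots. -/
def PivotEquiv : SimpleGraph V → SimpleGraph V → Prop := Relation.ReflTransGen PivotStep

/-- `A` is a fully closed set of `G` restricted to `S`. -/
def FullyClosed (G : SimpleGraph V) (S A : Finset V) : Prop :=
  A ⊆ S ∧ cutRank G S A = 2 ∧ 2 < A.card ∧
    ∀ u ∈ S, u ∉ A → cutRank G S A < cutRank G S (insert u A)

/-- `{a,b,c}` is a triplet of `G` (on vertex set `univ`). -/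
def Triplet (G : SimpleGraph V) (a b c : V) : Prop :=
  cutRank G Finset.univ {a, b, c} = 2 ∧
  ∀ x ∈ ({a, b, c} : Finset V),
    cutRank G (Finset.univ \ {x}) (({a, b, c} : Finset V) \ {x}) = 2

/-- `B` is a `k`-branched set of `G` restricted to `S`. -/
inductive KBranched (G : SimpleGraph V) (S : Finset V) (k : ℕ) : Finset V → Prop
  | single (v : V) (hv : v ∈ S) (h : cutRank G S {v} ≤ k) : KBranched G S k {v}
  | split (B B' : Finset V) (hB : B ⊆ S) (h : cutRank G S B ≤ k)
      (h1 : B' ⊆ B) (h2 : B'.Nonempty) (h3 : B' ≠ B)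
      (hb1 : KBranched G S k B') (hb2 : KBranched G S k (B \ B')) : KBranched G S k B

/-- The rank-width of `G` restricted to `S`: the least `k` such that `S` is `k`-branched
(equivalently, the minimum width of a rank-decomposition). -/
noncomputable def rankWidth (G : SimpleGraph V) (S : Finset V) : ℕ :=
  sInf {k | S = ∅ ∨ KBranched G S k S}

/-- `A` is a titanic set of `G` restricted to `S`. -/
def Titanic (G : SimpleGraph V) (S A : Finset V) : Prop :=
  ∀ A1 A2 A3 : Finset V, A1 ∪ A2 ∪ A3 = A →
    Disjoint A1 A2 → Disjoint A1 A3 → Disjoint A2 A3 →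
    cutRank G S A ≤ cutRank G S A1 ∨ cutRank G S A ≤ cutRank G S A2 ∨
      cutRank G S A ≤ cutRank G S A3

/-!
Let `P X` be the span of the rows of a matrix indexed by `X` and `Z Y` the space of vectors
vanishing on `Y`. The rank of the `X × Y` submatrix is `dim (P X + Z Y) - dim (Z Y)`. Since
`Z (Y₁ ∪ Y₂) = Z Y₁ ∩ Z Y₂` and `Z (Y₁ ∩ Y₂) = Z Y₁ + Z Y₂`, the modular law for dimensions of
subspaces makes submatrix rank bisubmodular:
`r(X₁ ∩ X₂, Y₁ ∪ Y₂) + r(X₁ ∪ X₂, Y₁ ∩ Y₂) ≤ r(X₁, Y₁) + r(X₂, Y₂)`.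
As `b ∈ A` and `a ∈ B`, the complement of `A ∩ B` in `V - a - b` is the union, and the
complement of `A ∪ B` in `V` the intersection, of the complements of `A` in `V - a` and of `B`
in `V - b`.
-/

open Module Submodule

namespace Submodule

variable {K E F : Type*} [Field K] [AddCommGroup E] [Module K E] [AddCommGroup F] [Module K F]
  [FiniteDimensional K E]

theorem finrank_inf_sup_inf_add_finrank_sup_sup_le (p₁ p₂ q₁ q₂ : Submodule K E) :
    finrank K ↥(p₁ ⊓ p₂ ⊔ q₁ ⊓ q₂) + finrank K ↥(p₁ ⊔ p₂ ⊔ (q₁ ⊔ q₂)) ≤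
      finrank K ↥(p₁ ⊔ q₁) + finrank K ↥(p₂ ⊔ q₂) := by
  have hinf : p₁ ⊓ p₂ ⊔ q₁ ⊓ q₂ ≤ (p₁ ⊔ q₁) ⊓ (p₂ ⊔ q₂) :=
    sup_le (inf_le_inf le_sup_left le_sup_left) (inf_le_inf le_sup_right le_sup_right)
  calc _ ≤ finrank K ↥((p₁ ⊔ q₁) ⊓ (p₂ ⊔ q₂)) + finrank K ↥(p₁ ⊔ q₁ ⊔ (p₂ ⊔ q₂)) := by
        rw [sup_sup_sup_comm]; exact Nat.add_le_add_right (finrank_mono hinf) _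
    _ = _ := by rw [add_comm]; exact finrank_sup_add_finrank_inf_eq _ _

theorem finrank_map_add_finrank_ker (f : E →ₗ[K] F) (p : Submodule K E) :
    finrank K ↥(p.map f) + finrank K ↥(LinearMap.ker f) =
      finrank K ↥(p ⊔ LinearMap.ker f) := by
  have hmap : (p ⊔ LinearMap.ker f).map f = p.map f := by
    refine le_antisymm ?_ (map_mono le_sup_left)
    rw [← comap_map_eq]
    exact map_comap_le f _
  have hker : finrank K ↥((LinearMap.ker f).comap (p ⊔ LinearMap.ker f).subtype) =
      finrank K ↥(LinearMap.ker f) :=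
    (comapSubtypeEquivOfLe le_sup_right).finrank_eq
  have := (f.domRestrict (p ⊔ LinearMap.ker f)).finrank_range_add_finrank_ker
  rwa [LinearMap.range_domRestrict, hmap, LinearMap.ker_domRestrict, hker] at this

end Submodule

section VanishingOn

variable (K : Type*) {n : Type*} [Field K]

def vanishingOn (Y : Finset n) : Submodule K (n → K) :=
  LinearMap.ker (LinearMap.funLeft K K ((↑) : Y → n))

variable {K}

theorem mem_vanishingOn {Y : Finset n} {v : n → K} :
    v ∈ vanishingOn K Y ↔ ∀ y ∈ Y, v y = 0 := by
  simp [vanishingOn, funext_iff]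

variable [DecidableEq n]

theorem vanishingOn_union (Y₁ Y₂ : Finset n) :
    vanishingOn K (Y₁ ∪ Y₂) = vanishingOn K Y₁ ⊓ vanishingOn K Y₂ := by
  ext v
  simp only [Submodule.mem_inf, mem_vanishingOn, Finset.mem_union]
  grind

theorem vanishingOn_inter (Y₁ Y₂ : Finset n) :
    vanishingOn K (Y₁ ∩ Y₂) = vanishingOn K Y₁ ⊔ vanishingOn K Y₂ := by
  refine le_antisymm (fun v hv => ?_) (sup_le ?_ ?_)
  · rw [mem_vanishingOn] at hv
    rw [← Set.indicator_compl_add_self (↑Y₁) v]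
    refine add_mem_sup ?_ ?_ <;> rw [mem_vanishingOn] <;> intro y hy
    · simp [hy]
    · by_cases hy₁ : y ∈ Y₁
      · simp [hy₁, hv y (mem_inter.mpr ⟨hy₁, hy⟩)]
      · simp [hy₁]
  all_goals
    intro v hv
    simp only [mem_vanishingOn, Finset.mem_inter] at hv ⊢
    grind

end VanishingOn

namespace Matrix

variable {K m n : Type*} [Field K]

theorem rank_submatrix_add_finrank_vanishingOn [Finite n] (M : Matrix m n K) (X : Finset m)
    (Y : Finset n) :
    (M.submatrix ((↑) : X → m) ((↑) : Y → n)).rank + finrank K ↥(vanishingOn K Y) =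
      finrank K ↥(span K (M.row '' X) ⊔ vanishingOn K Y) := by
  have hrows : Set.range (M.submatrix ((↑) : X → m) ((↑) : Y → n)).row =
      LinearMap.funLeft K K ((↑) : Y → n) '' (M.row '' X) := by
    ext v
    constructor
    · rintro ⟨i, rfl⟩
      exact ⟨M.row i, ⟨i, i.2, rfl⟩, rfl⟩
    · rintro ⟨_, ⟨i, hi, rfl⟩, rfl⟩
      exact ⟨⟨i, hi⟩, rfl⟩
  rw [rank_eq_finrank_span_row, hrows, span_image]
  exact finrank_map_add_finrank_ker _ _

variable [Finite n] [DecidableEq m] [DecidableEq n]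

theorem rank_submatrix_inter_union_add_le (M : Matrix m n K) (X₁ X₂ : Finset m)
    (Y₁ Y₂ : Finset n) :
    (M.submatrix ((↑) : ↥(X₁ ∩ X₂) → m) ((↑) : ↥(Y₁ ∪ Y₂) → n)).rank +
        (M.submatrix ((↑) : ↥(X₁ ∪ X₂) → m) ((↑) : ↥(Y₁ ∩ Y₂) → n)).rank ≤
      (M.submatrix ((↑) : X₁ → m) ((↑) : Y₁ → n)).rank +
        (M.submatrix ((↑) : X₂ → m) ((↑) : Y₂ → n)).rank := by
  have h₁ := M.rank_submatrix_add_finrank_vanishingOn (X₁ ∩ X₂) (Y₁ ∪ Y₂)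
  have h₂ := M.rank_submatrix_add_finrank_vanishingOn (X₁ ∪ X₂) (Y₁ ∩ Y₂)
  have h₃ := M.rank_submatrix_add_finrank_vanishingOn X₁ Y₁
  have h₄ := M.rank_submatrix_add_finrank_vanishingOn X₂ Y₂
  rw [vanishingOn_union] at h₁
  rw [vanishingOn_inter, coe_union, Set.image_union, span_union] at h₂
  set P₁ := span K (M.row '' X₁)
  set P₂ := span K (M.row '' X₂)
  set Z₁ := vanishingOn K Y₁
  set Z₂ := vanishingOn K Y₂
  have hP : span K (M.row '' ↑(X₁ ∩ X₂)) ≤ P₁ ⊓ P₂ :=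
    le_inf (span_mono (Set.image_mono (by simp))) (span_mono (Set.image_mono (by simp)))
  have hmono := finrank_mono (sup_le_sup_right hP (Z₁ ⊓ Z₂))
  have hmodular := finrank_inf_sup_inf_add_finrank_sup_sup_le P₁ P₂ Z₁ Z₂
  have hZ := finrank_sup_add_finrank_inf_eq Z₁ Z₂
  omega

end Matrix

theorem cutRankOn_inter_union_add_le (G : SimpleGraph V) (X₁ X₂ Y₁ Y₂ : Finset V) :
    cutRankOn G (X₁ ∩ X₂) (Y₁ ∪ Y₂) + cutRankOn G (X₁ ∪ X₂) (Y₁ ∩ Y₂) ≤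
      cutRankOn G X₁ Y₁ + cutRankOn G X₂ Y₂ :=
  (G.adjMatrix (ZMod 2)).rank_submatrix_inter_union_add_le X₁ X₂ Y₁ Y₂

theorem cutRank_del_del_inter_general {G : SimpleGraph V} {a b : V} {A B : Finset V}
    (hbA : b ∈ A) (haB : a ∈ B) :
    cutRank G ((Finset.univ \ {a}) \ {b}) (A ∩ B) + cutRank G Finset.univ (A ∪ B) ≤
      cutRank G (Finset.univ \ {a}) A + cutRank G (Finset.univ \ {b}) B := by
  have hcompl_inter :
      ((univ \ {a}) \ {b}) \ (A ∩ B) = ((univ \ {a}) \ A) ∪ ((univ \ {b}) \ B) := by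
    ext x; grind
  have hcompl_union : univ \ (A ∪ B) = ((univ \ {a}) \ A) ∩ ((univ \ {b}) \ B) := by
    ext x; grind
  rw [cutRank, cutRank, cutRank, cutRank, hcompl_inter, hcompl_union]
  exact cutRankOn_inter_union_add_le G A B _ _

theorem cutRank_del_del_inter {G : SimpleGraph V} {a b : V} (hab : a ≠ b)
    {A B : Finset V} (hA : A ⊆ Finset.univ \ {a}) (hB : B ⊆ Finset.univ \ {b})
    (hbA : b ∈ A) (haB : a ∈ B) :
    cutRank G ((Finset.univ \ {a}) \ {b}) (A ∩ B) + cutRank G Finset.univ (A ∪ B) ≤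
      cutRank G (Finset.univ \ {a}) A + cutRank G (Finset.univ \ {b}) B :=
  cutRank_del_del_inter_general hbA haB
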